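/- arXiv:1510.02451 — 7 statements merged into one kernel-verified Lean document; each statement's English description precedes it below -/
import Mathlib

section
/- For every nonnegative measurable function h : ℝ^d × ℝ^d → [0,∞), the following change-of-variables identity holds (as an equality in [0,∞]): ∫∫ λ(x,v) h(x, R(x)v) π(x) ψ(v) dx dv = ∫∫ λ(x, R(x)v) h(x,v) π(x) ψ(v) dx dv. -/
open scoped RealInnerProductSpace ENNReal
open MeasureTheory

/-!
For fixed `x`, the bounce `v ↦ R(x)v` is the reflection in the hyperplane orthogonal to `∇U(x)`
(the identity when `∇U(x) = 0`). It is a linear isometry, hence preserves Lebesgue measure and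
the Gaussian density `ψ`, and it is an involution. Substituting `v ↦ R(x)v` in the inner
integral therefore exchanges the roles of `v` and `R(x)v`, which is the identity.
-/

section

variable {E : Type*} [NormedAddCommGroup E] [InnerProductSpace ℝ E]

/-- Also true for `u = 0`, where both sides are `v` (the division is `0 / 0 = 0`). -/
theorem Submodule.reflection_orthogonal_span_singleton_apply (u v : E) :
    (ℝ ∙ u)ᗮ.reflection v = v - (2 * ⟪u, v⟫ / ‖u‖ ^ 2) • u := by
  rw [Submodule.reflection_orthogonal_apply, Submodule.reflection_singleton_apply, neg_sub,
    two_smul, ← add_smul, RCLike.ofReal_real_eq_id, id_eq, ← two_mul, mul_div_assoc]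

variable [FiniteDimensional ℝ E] [MeasurableSpace E] [BorelSpace E]

theorem LinearIsometryEquiv.lintegral_comp_swap_of_involutive (T : E ≃ₗᵢ[ℝ] E)
    (hT : Function.Involutive T) (F : E → E → ℝ≥0∞) :
    ∫⁻ v, F v (T v) = ∫⁻ v, F (T v) v := by
  rw [← T.measurePreserving.lintegral_comp_emb T.toHomeomorph.measurableEmbedding]
  simp only [hT _]

end

theorem bps_bounce_change_of_variables_general {d : ℕ}
    (U : EuclideanSpace ℝ (Fin d) → ℝ)
    (p : EuclideanSpace ℝ (Fin d) → ℝ)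
    (ψ : EuclideanSpace ℝ (Fin d) → ℝ)
    (hψ : ∀ v, ψ v = (2 * Real.pi) ^ (-(d : ℝ) / 2) * Real.exp (-‖v‖ ^ 2 / 2))
    (lam : EuclideanSpace ℝ (Fin d) → EuclideanSpace ℝ (Fin d) → ℝ)
    (R : EuclideanSpace ℝ (Fin d) → EuclideanSpace ℝ (Fin d) → EuclideanSpace ℝ (Fin d))
    (hR0 : ∀ x v, gradient U x = 0 → R x v = v)
    (hR1 : ∀ x v, gradient U x ≠ 0 →
      R x v = v - (2 * ⟪gradient U x, v⟫ / ‖gradient U x‖ ^ 2) • gradient U x)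
    (h : EuclideanSpace ℝ (Fin d) × EuclideanSpace ℝ (Fin d) → ℝ) :
    ∫⁻ x : EuclideanSpace ℝ (Fin d), ∫⁻ v : EuclideanSpace ℝ (Fin d),
        ENNReal.ofReal (lam x v * h (x, R x v) * (p x * ψ v)) =
    ∫⁻ x : EuclideanSpace ℝ (Fin d), ∫⁻ v : EuclideanSpace ℝ (Fin d),
        ENNReal.ofReal (lam x (R x v) * h (x, v) * (p x * ψ v)) := by
  refine lintegral_congr fun x => ?_
  set T := (ℝ ∙ gradient U x)ᗮ.reflection
  have hRT : R x = T := by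
    ext1 v
    rw [Submodule.reflection_orthogonal_span_singleton_apply]
    by_cases hx : gradient U x = 0
    · simp [hR0 x v hx, hx]
    · exact hR1 x v hx
  have hψT : ∀ v, ψ (T v) = ψ v := fun v => by rw [hψ, hψ, T.norm_map]
  rw [hRT]
  convert T.lintegral_comp_swap_of_involutive (Submodule.reflection_reflection _)
    (fun a b => ENNReal.ofReal (lam x a * h (x, b) * (p x * ψ a))) using 3 with v
  rw [hψT]

/-- Change-of-variables identity for the BPS bounce operator. For every
nonnegative measurable `h`, in `[0,∞]`:
`∫∫ λ(x,v) h(x, R(x)v) π(x) ψ(v) dx dv = ∫∫ λ(x, R(x)v) h(x,v) π(x) ψ(v) dx dv`. -/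
theorem bps_bounce_change_of_variables {d : ℕ}
    (U : EuclideanSpace ℝ (Fin d) → ℝ) (hU : ContDiff ℝ 1 U)
    (Z : ℝ) (hZ : Z = ∫ x : EuclideanSpace ℝ (Fin d), Real.exp (-U x))
    (hZpos : 0 < Z)
    (hZfin : Integrable fun x : EuclideanSpace ℝ (Fin d) => Real.exp (-U x))
    (p : EuclideanSpace ℝ (Fin d) → ℝ) (hp : ∀ x, p x = Real.exp (-U x) / Z)
    (ψ : EuclideanSpace ℝ (Fin d) → ℝ)
    (hψ : ∀ v, ψ v = (2 * Real.pi) ^ (-(d : ℝ) / 2) * Real.exp (-‖v‖ ^ 2 / 2))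
    (lam : EuclideanSpace ℝ (Fin d) → EuclideanSpace ℝ (Fin d) → ℝ)
    (hlam : ∀ x v, lam x v = max 0 ⟪gradient U x, v⟫)
    (R : EuclideanSpace ℝ (Fin d) → EuclideanSpace ℝ (Fin d) → EuclideanSpace ℝ (Fin d))
    (hR0 : ∀ x v, gradient U x = 0 → R x v = v)
    (hR1 : ∀ x v, gradient U x ≠ 0 →
      R x v = v - (2 * ⟪gradient U x, v⟫ / ‖gradient U x‖ ^ 2) • gradient U x)
    (h : EuclideanSpace ℝ (Fin d) × EuclideanSpace ℝ (Fin d) → ℝ)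
    (hmeas : Measurable h) (hnonneg : ∀ z, 0 ≤ h z) :
    ∫⁻ x : EuclideanSpace ℝ (Fin d), ∫⁻ v : EuclideanSpace ℝ (Fin d),
        ENNReal.ofReal (lam x v * h (x, R x v) * (p x * ψ v)) =
    ∫⁻ x : EuclideanSpace ℝ (Fin d), ∫⁻ v : EuclideanSpace ℝ (Fin d),
        ENNReal.ofReal (lam x (R x v) * h (x, v) * (p x * ψ v)) :=
  bps_bounce_change_of_variables_general U p ψ hψ lam R hR0 hR1 h
end

section
/- (Core of Proposition 1.) For any λ_ref ≥ 0 and any smooth compactly supported function h : ℝ^d × ℝ^d → ℝ, the generator of the Bouncy Particle Sampler, L h(x,v) = ⟨∇_x h(x,v), v⟩ + λ(x,v) ( h(x, R(x)v) - h(x,v) ) + λ_ref ∫ ( h(x,v') - h(x,v) ) ψ(v') dv', integrates to zero against ρ: ∫∫ L h(x,v) ρ(x,v) dx dv = 0. In other words, the probability measure ρ(x,v) = π(x) ψ(v) on ℝ^d × ℝ^d is infinitesimally invariant for the BPS generator. -/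
open scoped RealInnerProductSpace
open MeasureTheory


noncomputable section BPSAux

variable {d : ℕ}

private lemma bps_inner_gradient (f : EuclideanSpace ℝ (Fin d) → ℝ) (x v : EuclideanSpace ℝ (Fin d)) :
    ⟪gradient f x, v⟫ = fderiv ℝ f x v := by
  rw [gradient, InnerProductSpace.toDual_symm_apply]

private lemma bps_slice_snd {α β γ : Type*} [TopologicalSpace α] [TopologicalSpace β] [T2Space β]
    [Zero γ] {f : α × β → γ} (hf : HasCompactSupport f) (x : α) :
    HasCompactSupport fun y => f (x, y) := by
  refine HasCompactSupport.intro (hf.image continuous_snd) fun y hy => ?_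
  by_contra h0
  exact hy ⟨(x, y), subset_tsupport _ h0, rfl⟩

private lemma bps_slice_fst {α β γ : Type*} [TopologicalSpace α] [T2Space α] [TopologicalSpace β]
    [Zero γ] {f : α × β → γ} (hf : HasCompactSupport f) (y : β) :
    HasCompactSupport fun x => f (x, y) := by
  refine HasCompactSupport.intro (hf.image continuous_fst) fun x hx => ?_
  by_contra h0
  exact hx ⟨(x, y), subset_tsupport _ h0, rfl⟩

private lemma bps_gauss_integrable :
    Integrable fun v : EuclideanSpace ℝ (Fin d) => Real.exp (-‖v‖ ^ 2 / 2) := by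
  have h := (GaussianFourier.integrable_cexp_neg_mul_sq_norm_add (V := EuclideanSpace ℝ (Fin d))
      (b := (1/2 : ℂ)) (by norm_num) 0 (0 : EuclideanSpace ℝ (Fin d))).norm
  refine h.congr (Filter.Eventually.of_forall fun v => ?_)
  show ‖Complex.exp _‖ = _
  rw [Complex.norm_exp]
  congr 1
  simp [Complex.add_re, Complex.mul_re, ← Complex.ofReal_pow]
  ring

private lemma bps_reflection_apply (g v : EuclideanSpace ℝ (Fin d)) :
    (Submodule.reflection (ℝ ∙ g)ᗮ) v = v - (2 * ⟪g, v⟫ / ‖g‖ ^ 2) • g := by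
  rw [Submodule.reflection_apply, Submodule.starProjection_orthogonal_val,
    Submodule.starProjection_singleton, two_smul]
  simp only [RCLike.ofReal_real_eq_id, id_eq]
  module

private lemma bps_inner_reflection (g v : EuclideanSpace ℝ (Fin d)) (hg : g ≠ 0) :
    ⟪g, (Submodule.reflection (ℝ ∙ g)ᗮ) v⟫ = -⟪g, v⟫ := by
  have hn : ‖g‖ ≠ 0 := norm_ne_zero_iff.2 hg
  rw [bps_reflection_apply, inner_sub_right, real_inner_smul_right,
    real_inner_self_eq_norm_sq]
  field_simp
  ring

end BPSAux

noncomputable section BPS2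
variable {d : ℕ}

private lemma bps_hcs_of_forall {α γ δ : Type*} [TopologicalSpace α] [Zero γ] [Zero δ]
    {f : α → γ} {g : α → δ} [T2Space α]
    (hf : HasCompactSupport f) (hg : ∀ v, f v = 0 → g v = 0) : HasCompactSupport g :=
  HasCompactSupport.intro hf fun v hv => hg v (image_eq_zero_of_notMem_tsupport hv)

private lemma bps_ibp (U : EuclideanSpace ℝ (Fin d) → ℝ) (hU : ContDiff ℝ 1 U)
    (Z : ℝ) (hZpos : 0 < Z)
    (p : EuclideanSpace ℝ (Fin d) → ℝ) (hp : ∀ x, p x = Real.exp (-U x) / Z)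
    (h : EuclideanSpace ℝ (Fin d) × EuclideanSpace ℝ (Fin d) → ℝ)
    (hsmooth : ContDiff ℝ (⊤ : ℕ∞) h) (hsupp : HasCompactSupport h)
    (v : EuclideanSpace ℝ (Fin d)) :
    ∫ x, fderiv ℝ h (x, v) (v, 0) * p x
      = ∫ x, ⟪gradient U x, v⟫ * h (x, v) * p x := by
  have hUd : Differentiable ℝ U := hU.differentiable one_ne_zero
  have hUc : Continuous U := hU.continuous
  have hfdUc : Continuous (fderiv ℝ U) := hU.continuous_fderiv one_ne_zero
  have hhc : Continuous h := hsmooth.continuous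
  have hhd : Differentiable ℝ h := hsmooth.differentiable (by simp)
  have hfdc : Continuous (fderiv ℝ h) := hsmooth.continuous_fderiv (by simp)
  have hfds : HasCompactSupport (fderiv ℝ h) := HasCompactSupport.fderiv (𝕜 := ℝ) hsupp
  have hpc : Continuous p := by
    have : p = fun x => Real.exp (-U x) / Z := funext hp
    rw [this]; exact (Real.continuous_exp.comp hUc.neg).div_const Z
  -- derivative of p
  have hpd : ∀ x, HasFDerivAt p ((-p x) • fderiv ℝ U x) x := by
    intro x
    have hpe : p = fun y => Z⁻¹ * Real.exp (-U y) := by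
      funext y; rw [hp]; ring
    rw [hpe]
    have h1 : HasFDerivAt (fun y => Real.exp (-U y)) (Real.exp (-U x) • (-(fderiv ℝ U x))) x :=
      ((hUd x).hasFDerivAt.neg).exp
    have h2 := h1.const_mul Z⁻¹
    refine h2.congr_fderiv ?_
    ext w
    simp [hp]
    ring
  have hpdiff : Differentiable ℝ p := fun x => (hpd x).differentiableAt
  have hfdp : ∀ x, fderiv ℝ p x = (-p x) • fderiv ℝ U x := fun x => (hpd x).fderiv
  -- the slice function and its derivative
  have hfd : ∀ x : EuclideanSpace ℝ (Fin d), HasFDerivAt (fun x' => h (x', v))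
      ((fderiv ℝ h (x, v)).comp (ContinuousLinearMap.inl ℝ _ _)) x := by
    intro x
    exact (hhd (x, v)).hasFDerivAt.comp x (hasFDerivAt_prodMk_left x v)
  have hfdiff : Differentiable ℝ (fun x' => h (x', v)) := fun x => (hfd x).differentiableAt
  have hfderiv_eq : ∀ x, fderiv ℝ (fun x' => h (x', v)) x v = fderiv ℝ h (x, v) (v, 0) := by
    intro x
    rw [(hfd x).fderiv]
    simp
  -- compact supports
  have hsx : HasCompactSupport (fun x => h (x, v)) := bps_slice_fst hsupp v
  have hsfd : HasCompactSupport (fun x => fderiv ℝ h (x, v) (v, 0)) :=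
    bps_hcs_of_forall (bps_slice_fst hfds v) (fun x h0 => by simp [h0])
  -- continuity of slices
  have hcx : Continuous fun x => h (x, v) := hhc.comp (continuous_id.prodMk continuous_const)
  have hcfd : Continuous fun x => fderiv ℝ h (x, v) (v, 0) :=
    (hfdc.comp (continuous_id.prodMk continuous_const)).clm_apply continuous_const
  -- integrabilities
  have hI2 : Integrable fun x => fderiv ℝ (fun x' => h (x', v)) x v * p x := by
    have : (fun x => fderiv ℝ (fun x' => h (x', v)) x v * p x)
        = fun x => fderiv ℝ h (x, v) (v, 0) * p x := by
      funext x; rw [hfderiv_eq]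
    rw [this]
    exact (hcfd.mul hpc).integrable_of_hasCompactSupport
      (bps_hcs_of_forall hsfd (fun x h0 => by simp [h0]))
  have hI1 : Integrable fun x => h (x, v) * fderiv ℝ p x v := by
    have heq : (fun x => h (x, v) * fderiv ℝ p x v)
        = fun x => h (x, v) * (-p x * fderiv ℝ U x v) := by
      funext x; rw [hfdp]
      simp
    rw [heq]
    exact (hcx.mul ((hpc.neg).mul (hfdUc.clm_apply continuous_const))).integrable_of_hasCompactSupport
      (bps_hcs_of_forall hsx (fun x h0 => by simp [h0]))
  have hI3 : Integrable fun x => h (x, v) * p x :=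
    (hcx.mul hpc).integrable_of_hasCompactSupport
      (bps_hcs_of_forall hsx (fun x h0 => by simp [h0]))
  have key := integral_mul_fderiv_eq_neg_fderiv_mul_of_integrable
    (f := fun x => h (x, v)) (g := p) (v := v) hI2 hI1 hI3 (fun x _ => hfdiff x) (fun x _ => hpdiff x)
  beta_reduce at key
  -- rewrite both sides of key
  have e1 : (∫ x, h (x, v) * fderiv ℝ p x v)
      = -∫ x, ⟪gradient U x, v⟫ * h (x, v) * p x := by
    rw [← integral_neg]
    refine integral_congr_ae (Filter.Eventually.of_forall fun x => ?_)
    show h (x, v) * fderiv ℝ p x v = -(⟪gradient U x, v⟫ * h (x, v) * p x)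
    rw [hfdp, bps_inner_gradient]
    simp only [ContinuousLinearMap.smul_apply, smul_eq_mul, neg_mul]
    ring
  have e2 : (∫ x, fderiv ℝ h (x, v) (v, 0) * p x)
      = ∫ x, fderiv ℝ (fun x' => h (x', v)) x v * p x := by
    refine integral_congr_ae (Filter.Eventually.of_forall fun x => ?_)
    show fderiv ℝ h (x, v) (v, 0) * p x = fderiv ℝ (fun x' => h (x', v)) x v * p x
    rw [hfderiv_eq]
  rw [e1] at key
  rw [e2]
  linarith [key]

end BPS2

noncomputable section BPS3
variable {d : ℕ}

private lemma bps_max_sub (s : ℝ) : max 0 (-s) - max 0 s = -s := by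
  rcases le_total 0 s with hs | hs
  · rw [max_eq_left (neg_nonpos.2 hs), max_eq_right hs]; ring
  · rw [max_eq_right (neg_nonneg.2 hs), max_eq_left hs]; ring

private lemma bps_bounce (U : EuclideanSpace ℝ (Fin d) → ℝ)
    (ψ : EuclideanSpace ℝ (Fin d) → ℝ)
    (hψ : ∀ v, ψ v = (2 * Real.pi) ^ (-(d : ℝ) / 2) * Real.exp (-‖v‖ ^ 2 / 2))
    (lam : EuclideanSpace ℝ (Fin d) → EuclideanSpace ℝ (Fin d) → ℝ)
    (hlam : ∀ x v, lam x v = max 0 ⟪gradient U x, v⟫)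
    (R : EuclideanSpace ℝ (Fin d) → EuclideanSpace ℝ (Fin d) → EuclideanSpace ℝ (Fin d))
    (hR1 : ∀ x v, gradient U x ≠ 0 →
      R x v = v - (2 * ⟪gradient U x, v⟫ / ‖gradient U x‖ ^ 2) • gradient U x)
    (h : EuclideanSpace ℝ (Fin d) × EuclideanSpace ℝ (Fin d) → ℝ)
    (hsmooth : ContDiff ℝ (⊤ : ℕ∞) h) (hsupp : HasCompactSupport h)
    (x : EuclideanSpace ℝ (Fin d)) :
    ∫ v, lam x v * (h (x, R x v) - h (x, v)) * ψ v
      = -∫ v, ⟪gradient U x, v⟫ * h (x, v) * ψ v := by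
  have hψc : Continuous ψ := by
    have : ψ = fun v => (2 * Real.pi) ^ (-(d : ℝ) / 2) * Real.exp (-‖v‖ ^ 2 / 2) := funext hψ
    rw [this]
    exact continuous_const.mul
      (Real.continuous_exp.comp (((continuous_norm.pow 2).neg).div_const 2))
  have hhc : Continuous h := hsmooth.continuous
  have hhx : Continuous fun v => h (x, v) := hhc.comp (continuous_const.prodMk continuous_id)
  have hsx : HasCompactSupport fun v => h (x, v) := bps_slice_snd hsupp x
  by_cases hg : gradient U x = 0
  · have hz1 : ∀ v : EuclideanSpace ℝ (Fin d),
        lam x v * (h (x, R x v) - h (x, v)) * ψ v = 0 := by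
      intro v; rw [hlam, hg]; simp
    have hz2 : ∀ v : EuclideanSpace ℝ (Fin d),
        ⟪gradient U x, v⟫ * h (x, v) * ψ v = 0 := by
      intro v; rw [hg]; simp
    simp only [hz1, hz2, integral_zero, neg_zero]
  · set g := gradient U x with hgdef
    set T := Submodule.reflection (ℝ ∙ g)ᗮ with hTdef
    have hRT : ∀ v, R x v = T v := by
      intro v; rw [hR1 x v hg, hTdef, bps_reflection_apply]
    have hTT : ∀ v, T (T v) = v := fun v => Submodule.reflection_reflection _ v
    have hψT : ∀ v, ψ (T v) = ψ v := by
      intro v; rw [hψ, hψ, T.norm_map]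
    have hinnerT : ∀ v, ⟪g, T v⟫ = -⟪g, v⟫ := fun v => bps_inner_reflection g v hg
    have hlamc : Continuous fun v => lam x v := by
      have : (fun v => lam x v) = fun v => max 0 ⟪g, v⟫ := funext (hlam x)
      rw [this]
      exact continuous_const.max (continuous_const.inner continuous_id)
    have hlamTc : Continuous fun v => max 0 (-⟪g, v⟫) :=
      continuous_const.max (continuous_const.inner continuous_id).neg
    have hhxT : Continuous fun v => h (x, T v) :=
      hhx.comp T.continuous
    have hsxT : HasCompactSupport fun v => h (x, T v) := by
      have := hsx.comp_homeomorph T.toHomeomorph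
      exact this
    -- integrability of the three pieces
    have hI1 : Integrable fun v => lam x v * h (x, T v) * ψ v :=
      ((hlamc.mul hhxT).mul hψc).integrable_of_hasCompactSupport
        (bps_hcs_of_forall hsxT fun v h0 => by simp [h0])
    have hI2 : Integrable fun v => lam x v * h (x, v) * ψ v :=
      ((hlamc.mul hhx).mul hψc).integrable_of_hasCompactSupport
        (bps_hcs_of_forall hsx fun v h0 => by simp [h0])
    have hI3 : Integrable fun v => max 0 (-⟪g, v⟫) * h (x, v) * ψ v :=
      ((hlamTc.mul hhx).mul hψc).integrable_of_hasCompactSupport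
        (bps_hcs_of_forall hsx fun v h0 => by simp [h0])
    -- substitution in the first piece
    have hmp := (T.measurePreserving).integral_comp T.toHomeomorph.measurableEmbedding
        (fun v => lam x v * h (x, T v) * ψ v)
    have hsub : (∫ v, lam x v * h (x, T v) * ψ v)
        = ∫ v, max 0 (-⟪g, v⟫) * h (x, v) * ψ v := by
      rw [← hmp]
      refine integral_congr_ae (Filter.Eventually.of_forall fun v => ?_)
      show lam x (T v) * h (x, T (T v)) * ψ (T v) = max 0 (-⟪g, v⟫) * h (x, v) * ψ v
      rw [hlam, hTT, hψT, hinnerT]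
    -- put everything together
    have split : (∫ v, lam x v * (h (x, R x v) - h (x, v)) * ψ v)
        = (∫ v, lam x v * h (x, T v) * ψ v) - ∫ v, lam x v * h (x, v) * ψ v := by
      rw [← integral_sub hI1 hI2]
      refine integral_congr_ae (Filter.Eventually.of_forall fun v => ?_)
      show lam x v * (h (x, R x v) - h (x, v)) * ψ v
          = lam x v * h (x, T v) * ψ v - lam x v * h (x, v) * ψ v
      rw [hRT]; ring
    rw [split, hsub, ← integral_sub hI3 hI2, ← integral_neg]
    refine integral_congr_ae (Filter.Eventually.of_forall fun v => ?_)
    show max 0 (-⟪g, v⟫) * h (x, v) * ψ v - lam x v * h (x, v) * ψ v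
        = -(⟪g, v⟫ * h (x, v) * ψ v)
    rw [hlam, ← hgdef]
    have hms := bps_max_sub ⟪g, v⟫
    linear_combination (h (x, v) * ψ v) * hms

end BPS3

/-- Core of Proposition 1: the BPS generator integrates to zero against
`ρ(x,v) = π(x) ψ(v)`, i.e. `ρ` is infinitesimally invariant for the BPS generator. -/
theorem bps_generator_invariance {d : ℕ}
    (U : EuclideanSpace ℝ (Fin d) → ℝ) (hU : ContDiff ℝ 1 U)
    (Z : ℝ) (hZ : Z = ∫ x : EuclideanSpace ℝ (Fin d), Real.exp (-U x))
    (hZpos : 0 < Z)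
    (hZfin : Integrable fun x : EuclideanSpace ℝ (Fin d) => Real.exp (-U x))
    (p : EuclideanSpace ℝ (Fin d) → ℝ) (hp : ∀ x, p x = Real.exp (-U x) / Z)
    (ψ : EuclideanSpace ℝ (Fin d) → ℝ)
    (hψ : ∀ v, ψ v = (2 * Real.pi) ^ (-(d : ℝ) / 2) * Real.exp (-‖v‖ ^ 2 / 2))
    (lam : EuclideanSpace ℝ (Fin d) → EuclideanSpace ℝ (Fin d) → ℝ)
    (hlam : ∀ x v, lam x v = max 0 ⟪gradient U x, v⟫)
    (R : EuclideanSpace ℝ (Fin d) → EuclideanSpace ℝ (Fin d) → EuclideanSpace ℝ (Fin d))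
    (hR0 : ∀ x v, gradient U x = 0 → R x v = v)
    (hR1 : ∀ x v, gradient U x ≠ 0 →
      R x v = v - (2 * ⟪gradient U x, v⟫ / ‖gradient U x‖ ^ 2) • gradient U x)
    (lref : ℝ) (hlref : 0 ≤ lref)
    (h : EuclideanSpace ℝ (Fin d) × EuclideanSpace ℝ (Fin d) → ℝ)
    (hsmooth : ContDiff ℝ (⊤ : ℕ∞) h) (hsupp : HasCompactSupport h) :
    ∫ x : EuclideanSpace ℝ (Fin d), ∫ v : EuclideanSpace ℝ (Fin d),
        (⟪gradient (fun x' => h (x', v)) x, v⟫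
          + lam x v * (h (x, R x v) - h (x, v))
          + lref * ∫ v' : EuclideanSpace ℝ (Fin d), (h (x, v') - h (x, v)) * ψ v')
        * (p x * ψ v) = 0 := by
  have hUc : Continuous U := hU.continuous
  have hhc : Continuous h := hsmooth.continuous
  have hfdc : Continuous (fderiv ℝ h) := hsmooth.continuous_fderiv (by simp)
  have hfds : HasCompactSupport (fderiv ℝ h) := HasCompactSupport.fderiv (𝕜 := ℝ) hsupp
  have hpc : Continuous p := by
    have : p = fun y => Real.exp (-U y) / Z := funext hp
    rw [this]; exact (Real.continuous_exp.comp hUc.neg).div_const Z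
  have hψc : Continuous ψ := by
    have : ψ = fun v => (2 * Real.pi) ^ (-(d : ℝ) / 2) * Real.exp (-‖v‖ ^ 2 / 2) := funext hψ
    rw [this]
    exact continuous_const.mul
      (Real.continuous_exp.comp (((continuous_norm.pow 2).neg).div_const 2))
  have hψi : Integrable ψ := by
    have : ψ = fun v => (2 * Real.pi) ^ (-(d : ℝ) / 2) * Real.exp (-‖v‖ ^ 2 / 2) := funext hψ
    rw [this]; exact bps_gauss_integrable.const_mul _
  have hgUc : Continuous fun y => gradient U y := by
    simp only [gradient]
    exact (LinearIsometryEquiv.continuous _).comp (hU.continuous_fderiv one_ne_zero)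
  have hgradh : ∀ x v : EuclideanSpace ℝ (Fin d),
      ⟪gradient (fun x' => h (x', v)) x, v⟫ = fderiv ℝ h (x, v) (v, 0) := by
    intro x v
    rw [bps_inner_gradient]
    have hfd : HasFDerivAt (fun x' => h (x', v))
        ((fderiv ℝ h (x, v)).comp (ContinuousLinearMap.inl ℝ _ _)) x :=
      ((hsmooth.differentiable (by simp)) (x, v)).hasFDerivAt.comp x (hasFDerivAt_prodMk_left x v)
    rw [hfd.fderiv]
    simp
  -- inner integral identity
  have hinner : ∀ x : EuclideanSpace ℝ (Fin d),
      (∫ v : EuclideanSpace ℝ (Fin d),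
        (⟪gradient (fun x' => h (x', v)) x, v⟫
          + lam x v * (h (x, R x v) - h (x, v))
          + lref * ∫ v' : EuclideanSpace ℝ (Fin d), (h (x, v') - h (x, v)) * ψ v')
        * (p x * ψ v))
      = (∫ v, fderiv ℝ h (x, v) (v, 0) * p x * ψ v)
          - ∫ v, ⟪gradient U x, v⟫ * h (x, v) * p x * ψ v := by
    intro x
    have hhx : Continuous fun v => h (x, v) := hhc.comp (continuous_const.prodMk continuous_id)
    have hsx : HasCompactSupport fun v => h (x, v) := bps_slice_snd hsupp x
    have hhψx : Integrable fun v => h (x, v) * ψ v :=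
      (hhx.mul hψc).integrable_of_hasCompactSupport
        (bps_hcs_of_forall hsx fun v h0 => by simp [h0])
    have hT1i : Integrable fun v => fderiv ℝ h (x, v) (v, 0) * ψ v :=
      (((hfdc.comp (continuous_const.prodMk continuous_id)).clm_apply
        (continuous_id.prodMk continuous_const)).mul hψc).integrable_of_hasCompactSupport
        (bps_hcs_of_forall (bps_slice_snd hfds x) fun v h0 => by simp [h0])
    have hT2i : Integrable fun v => lam x v * (h (x, R x v) - h (x, v)) * ψ v := by
      by_cases hg : gradient U x = 0
      · refine (integrable_zero _ _ _).congr (Filter.Eventually.of_forall fun v => ?_)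
        have hl0 : lam x v = 0 := by rw [hlam, hg]; simp
        simp [hl0]
      · have hlamc : Continuous fun v => lam x v := by
          have : (fun v => lam x v) = fun v => max 0 ⟪gradient U x, v⟫ := funext (hlam x)
          rw [this]; exact continuous_const.max (continuous_const.inner continuous_id)
        have hhxT : Continuous fun v => h (x, (Submodule.reflection (ℝ ∙ (gradient U x))ᗮ) v) :=
          hhx.comp (Submodule.reflection _).continuous
        have hsxT : HasCompactSupport fun v => h (x, (Submodule.reflection (ℝ ∙ (gradient U x))ᗮ) v) :=
          hsx.comp_homeomorph (Submodule.reflection (ℝ ∙ (gradient U x))ᗮ).toHomeomorph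
        have hI1 : Integrable fun v =>
            lam x v * h (x, (Submodule.reflection (ℝ ∙ (gradient U x))ᗮ) v) * ψ v :=
          ((hlamc.mul hhxT).mul hψc).integrable_of_hasCompactSupport
            (bps_hcs_of_forall hsxT fun v h0 => by simp [h0])
        have hI2 : Integrable fun v => lam x v * h (x, v) * ψ v :=
          ((hlamc.mul hhx).mul hψc).integrable_of_hasCompactSupport
            (bps_hcs_of_forall hsx fun v h0 => by simp [h0])
        refine (hI1.sub hI2).congr (Filter.Eventually.of_forall fun v => ?_)
        show lam x v * h (x, (Submodule.reflection (ℝ ∙ (gradient U x))ᗮ) v) * ψ v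
            - lam x v * h (x, v) * ψ v = lam x v * (h (x, R x v) - h (x, v)) * ψ v
        rw [hR1 x v hg, ← bps_reflection_apply]
        ring
    have hstep1 : ∀ v : EuclideanSpace ℝ (Fin d),
        (∫ v' : EuclideanSpace ℝ (Fin d), (h (x, v') - h (x, v)) * ψ v')
        = (∫ v', h (x, v') * ψ v') - h (x, v) * ∫ v', ψ v' := by
      intro v
      calc (∫ v' : EuclideanSpace ℝ (Fin d), (h (x, v') - h (x, v)) * ψ v')
          = ∫ v' : EuclideanSpace ℝ (Fin d), (h (x, v') * ψ v' - h (x, v) * ψ v') :=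
            integral_congr_ae (Filter.Eventually.of_forall fun v' => by ring)
        _ = (∫ v', h (x, v') * ψ v') - ∫ v', h (x, v) * ψ v' :=
            integral_sub hhψx (hψi.const_mul _)
        _ = (∫ v', h (x, v') * ψ v') - h (x, v) * ∫ v', ψ v' := by
            rw [integral_const_mul]
    have hT3i : Integrable fun v =>
        (lref * ∫ v' : EuclideanSpace ℝ (Fin d), (h (x, v') - h (x, v)) * ψ v') * ψ v := by
      refine ((hψi.const_mul (lref * ∫ v', h (x, v') * ψ v')).sub
        (hhψx.const_mul (lref * ∫ v' : EuclideanSpace ℝ (Fin d), ψ v'))).congr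
        (Filter.Eventually.of_forall fun v => ?_)
      show (lref * ∫ v', h (x, v') * ψ v') * ψ v
          - (lref * ∫ v' : EuclideanSpace ℝ (Fin d), ψ v') * (h (x, v) * ψ v)
          = (lref * ∫ v' : EuclideanSpace ℝ (Fin d), (h (x, v') - h (x, v)) * ψ v') * ψ v
      rw [hstep1 v]
      ring
    have hT3z : (∫ v, (lref * ∫ v' : EuclideanSpace ℝ (Fin d),
        (h (x, v') - h (x, v)) * ψ v') * ψ v) = 0 := by
      have e : (∫ v, (lref * ∫ v' : EuclideanSpace ℝ (Fin d),
          (h (x, v') - h (x, v)) * ψ v') * ψ v)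
          = ∫ v, ((lref * ∫ v', h (x, v') * ψ v') * ψ v
              - (lref * ∫ v' : EuclideanSpace ℝ (Fin d), ψ v') * (h (x, v) * ψ v)) := by
        refine integral_congr_ae (Filter.Eventually.of_forall fun v => ?_)
        show (lref * ∫ v' : EuclideanSpace ℝ (Fin d), (h (x, v') - h (x, v)) * ψ v') * ψ v = _
        rw [hstep1 v]
        ring
      rw [e, integral_sub (hψi.const_mul _) (hhψx.const_mul _),
        integral_const_mul, integral_const_mul]
      ring
    have hT2z := bps_bounce U ψ hψ lam hlam R hR1 h hsmooth hsupp x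
    calc (∫ v : EuclideanSpace ℝ (Fin d),
        (⟪gradient (fun x' => h (x', v)) x, v⟫
          + lam x v * (h (x, R x v) - h (x, v))
          + lref * ∫ v' : EuclideanSpace ℝ (Fin d), (h (x, v') - h (x, v)) * ψ v')
        * (p x * ψ v))
        = ∫ v, p x * ((fderiv ℝ h (x, v) (v, 0) * ψ v)
            + (lam x v * (h (x, R x v) - h (x, v)) * ψ v)
            + ((lref * ∫ v' : EuclideanSpace ℝ (Fin d), (h (x, v') - h (x, v)) * ψ v') * ψ v)) := by
          refine integral_congr_ae (Filter.Eventually.of_forall fun v => ?_)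
          show (⟪gradient (fun x' => h (x', v)) x, v⟫
            + lam x v * (h (x, R x v) - h (x, v))
            + lref * ∫ v' : EuclideanSpace ℝ (Fin d), (h (x, v') - h (x, v)) * ψ v')
            * (p x * ψ v) = _
          rw [hgradh]
          ring
      _ = p x * ∫ v, ((fderiv ℝ h (x, v) (v, 0) * ψ v)
            + (lam x v * (h (x, R x v) - h (x, v)) * ψ v)
            + ((lref * ∫ v' : EuclideanSpace ℝ (Fin d), (h (x, v') - h (x, v)) * ψ v') * ψ v)) :=
          integral_const_mul _ _
      _ = p x * ((∫ v, fderiv ℝ h (x, v) (v, 0) * ψ v)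
            + (∫ v, lam x v * (h (x, R x v) - h (x, v)) * ψ v)
            + ∫ v, (lref * ∫ v' : EuclideanSpace ℝ (Fin d),
                (h (x, v') - h (x, v)) * ψ v') * ψ v) := by
          have e1 : (∫ v, ((fderiv ℝ h (x, v) (v, 0) * ψ v)
              + (lam x v * (h (x, R x v) - h (x, v)) * ψ v)
              + ((lref * ∫ v' : EuclideanSpace ℝ (Fin d),
                  (h (x, v') - h (x, v)) * ψ v') * ψ v)))
              = (∫ v, ((fderiv ℝ h (x, v) (v, 0) * ψ v)
                + (lam x v * (h (x, R x v) - h (x, v)) * ψ v)))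
                + ∫ v, (lref * ∫ v' : EuclideanSpace ℝ (Fin d),
                    (h (x, v') - h (x, v)) * ψ v') * ψ v :=
            integral_add (hT1i.add hT2i) hT3i
          have e2 : (∫ v, ((fderiv ℝ h (x, v) (v, 0) * ψ v)
              + (lam x v * (h (x, R x v) - h (x, v)) * ψ v)))
              = (∫ v, fderiv ℝ h (x, v) (v, 0) * ψ v)
                + ∫ v, lam x v * (h (x, R x v) - h (x, v)) * ψ v :=
            integral_add hT1i hT2i
          rw [e1, e2]
      _ = p x * ((∫ v, fderiv ℝ h (x, v) (v, 0) * ψ v)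
            - ∫ v, ⟪gradient U x, v⟫ * h (x, v) * ψ v) := by
          rw [hT2z, hT3z]; ring
      _ = (∫ v, fderiv ℝ h (x, v) (v, 0) * p x * ψ v)
            - ∫ v, ⟪gradient U x, v⟫ * h (x, v) * p x * ψ v := by
          rw [mul_sub, ← integral_const_mul, ← integral_const_mul]
          congr 1
          · exact integral_congr_ae (Filter.Eventually.of_forall fun v => by ring)
          · exact integral_congr_ae (Filter.Eventually.of_forall fun v => by ring)
  -- product integrability
  have hF1i : Integrable (Function.uncurry fun x v : EuclideanSpace ℝ (Fin d) =>
      fderiv ℝ h (x, v) (v, 0) * p x * ψ v)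
      ((volume : Measure (EuclideanSpace ℝ (Fin d))).prod volume) := by
    rw [← MeasureTheory.Measure.volume_eq_prod]
    have hc : Continuous fun q : EuclideanSpace ℝ (Fin d) × EuclideanSpace ℝ (Fin d) =>
        fderiv ℝ h (q.1, q.2) (q.2, 0) * p q.1 * ψ q.2 :=
      (((hfdc.comp (continuous_fst.prodMk continuous_snd)).clm_apply
        (continuous_snd.prodMk continuous_const)).mul (hpc.comp continuous_fst)).mul
        (hψc.comp continuous_snd)
    exact hc.integrable_of_hasCompactSupport
      (bps_hcs_of_forall hfds fun q h0 => by simp [Prod.mk.eta, h0])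
  have hF2i : Integrable (Function.uncurry fun x v : EuclideanSpace ℝ (Fin d) =>
      ⟪gradient U x, v⟫ * h (x, v) * p x * ψ v)
      ((volume : Measure (EuclideanSpace ℝ (Fin d))).prod volume) := by
    rw [← MeasureTheory.Measure.volume_eq_prod]
    have hc : Continuous fun q : EuclideanSpace ℝ (Fin d) × EuclideanSpace ℝ (Fin d) =>
        ⟪gradient U q.1, q.2⟫ * h (q.1, q.2) * p q.1 * ψ q.2 :=
      ((((hgUc.comp continuous_fst).inner continuous_snd).mul
        (hhc.comp (continuous_fst.prodMk continuous_snd))).mul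
        (hpc.comp continuous_fst)).mul (hψc.comp continuous_snd)
    exact hc.integrable_of_hasCompactSupport
      (bps_hcs_of_forall hsupp fun q h0 => by simp [Prod.mk.eta, h0])
  have hM1 : Integrable (fun x => ∫ v, fderiv ℝ h (x, v) (v, 0) * p x * ψ v) volume :=
    hF1i.integral_prod_left
  have hM2 : Integrable (fun x => ∫ v, ⟪gradient U x, v⟫ * h (x, v) * p x * ψ v) volume :=
    hF2i.integral_prod_left
  have hsw1 : (∫ x, ∫ v, fderiv ℝ h (x, v) (v, 0) * p x * ψ v)
      = ∫ v, ∫ x, fderiv ℝ h (x, v) (v, 0) * p x * ψ v :=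
    integral_integral_swap hF1i
  have hsw2 : (∫ x, ∫ v, ⟪gradient U x, v⟫ * h (x, v) * p x * ψ v)
      = ∫ v, ∫ x, ⟪gradient U x, v⟫ * h (x, v) * p x * ψ v :=
    integral_integral_swap hF2i
  have hper : ∀ v : EuclideanSpace ℝ (Fin d),
      (∫ x, fderiv ℝ h (x, v) (v, 0) * p x * ψ v)
      = ∫ x, ⟪gradient U x, v⟫ * h (x, v) * p x * ψ v := by
    intro v
    rw [integral_mul_const, integral_mul_const,
      bps_ibp U hU Z hZpos p hp h hsmooth hsupp v]
  calc (∫ x : EuclideanSpace ℝ (Fin d), ∫ v : EuclideanSpace ℝ (Fin d),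
        (⟪gradient (fun x' => h (x', v)) x, v⟫
          + lam x v * (h (x, R x v) - h (x, v))
          + lref * ∫ v' : EuclideanSpace ℝ (Fin d), (h (x, v') - h (x, v)) * ψ v')
        * (p x * ψ v))
      = ∫ x, ((∫ v, fderiv ℝ h (x, v) (v, 0) * p x * ψ v)
          - ∫ v, ⟪gradient U x, v⟫ * h (x, v) * p x * ψ v) :=
        integral_congr_ae (Filter.Eventually.of_forall fun x => hinner x)
    _ = (∫ x, ∫ v, fderiv ℝ h (x, v) (v, 0) * p x * ψ v)
          - ∫ x, ∫ v, ⟪gradient U x, v⟫ * h (x, v) * p x * ψ v := integral_sub hM1 hM2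
    _ = (∫ v, ∫ x, fderiv ℝ h (x, v) (v, 0) * p x * ψ v)
          - ∫ v, ∫ x, ⟪gradient U x, v⟫ * h (x, v) * p x * ψ v := by rw [hsw1, hsw2]
    _ = 0 := by
        have e : (∫ v, ∫ x, fderiv ℝ h (x, v) (v, 0) * p x * ψ v)
            = ∫ v, ∫ x, ⟪gradient U x, v⟫ * h (x, v) * p x * ψ v :=
          integral_congr_ae (Filter.Eventually.of_forall fun v => hper v)
        rw [e, sub_self]
end

section
/- (Lemma 2 of the paper.) Let ε, t > 0 with ε ≤ t/6, let v, v₂ ∈ ℝ^d with ‖v‖ ≤ 1 and ‖v₂‖ ≤ 1, let x, x' ∈ ℝ^d with ‖x‖ ≤ ε and ‖x'‖ ≤ ε, and let τ₁, τ₂ ∈ ℝ with 0 ≤ τ₁ ≤ t/6 and 2t/3 ≤ τ₂ ≤ 5t/6. Define v₁ = ( (x' - (t - τ₁ - τ₂) v₂) - (x + τ₁ v) ) / τ₂. Then ‖v₁‖ ≤ 1. -/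
/-- Lemma 2 of the paper: the intermediate velocity
`v₁ = ((x' - (t - τ₁ - τ₂) v₂) - (x + τ₁ v)) / τ₂` has norm at most 1 under the
stated bounds on `ε, t, τ₁, τ₂, v, v₂, x, x'`. -/
theorem bps_intermediate_velocity_norm_le_one {d : ℕ}
    (ε t : ℝ) (hε : 0 < ε) (ht : 0 < t) (hεt : ε ≤ t / 6)
    (v v₂ x x' : EuclideanSpace ℝ (Fin d))
    (hv : ‖v‖ ≤ 1) (hv₂ : ‖v₂‖ ≤ 1) (hx : ‖x‖ ≤ ε) (hx' : ‖x'‖ ≤ ε)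
    (τ₁ τ₂ : ℝ) (hτ₁0 : 0 ≤ τ₁) (hτ₁ : τ₁ ≤ t / 6)
    (hτ₂l : 2 * t / 3 ≤ τ₂) (hτ₂u : τ₂ ≤ 5 * t / 6) :
    ‖τ₂⁻¹ • ((x' - (t - τ₁ - τ₂) • v₂) - (x + τ₁ • v))‖ ≤ 1 := by
  have hτ₂ : 0 < τ₂ := by nlinarith
  have key : ‖(x' - (t - τ₁ - τ₂) • v₂) - (x + τ₁ • v)‖ ≤ τ₂ := by
    have h1 : ‖(x' - (t - τ₁ - τ₂) • v₂) - (x + τ₁ • v)‖ ≤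
        ‖x'‖ + ‖(t - τ₁ - τ₂) • v₂‖ + (‖x‖ + ‖τ₁ • v‖) := by
      calc ‖(x' - (t - τ₁ - τ₂) • v₂) - (x + τ₁ • v)‖
          ≤ ‖x' - (t - τ₁ - τ₂) • v₂‖ + ‖x + τ₁ • v‖ := norm_sub_le _ _
        _ ≤ ‖x'‖ + ‖(t - τ₁ - τ₂) • v₂‖ + (‖x‖ + ‖τ₁ • v‖) := by
            gcongr <;> [exact norm_sub_le _ _; exact norm_add_le _ _]
    have h2 : ‖(t - τ₁ - τ₂) • v₂‖ ≤ |t - τ₁ - τ₂| := by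
      rw [norm_smul, Real.norm_eq_abs]
      nlinarith [abs_nonneg (t - τ₁ - τ₂), norm_nonneg v₂]
    have h3 : ‖τ₁ • v‖ ≤ τ₁ := by
      rw [norm_smul, Real.norm_eq_abs, abs_of_nonneg hτ₁0]
      nlinarith [norm_nonneg v]
    have h4 : |t - τ₁ - τ₂| = t - τ₁ - τ₂ := abs_of_nonneg (by linarith)
    linarith [h1, h2, h3, h4.le, h4.ge]
  rw [norm_smul, Real.norm_eq_abs, abs_of_pos (inv_pos.mpr hτ₂)]
  rw [inv_mul_le_iff₀ hτ₂, mul_one]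
  exact key
end

section
/- (Example 2 of the paper.) Let U(x) = ‖x‖² on ℝ^d, let x, v ∈ ℝ^d with v ≠ 0, and let V ∈ (0,1). Define τ = ( -⟨x,v⟩ + sqrt( -‖v‖² log V ) ) / ‖v‖² if ⟨x,v⟩ ≤ 0, and τ = ( -⟨x,v⟩ + sqrt( ⟨x,v⟩² - ‖v‖² log V ) ) / ‖v‖² otherwise. Then τ ≥ 0 and ∫₀^τ max(0, ⟨∇U(x + s v), v⟩) ds = -log V, i.e., τ solves the bounce-time equation of the Bouncy Particle Sampler for the Gaussian energy. -/
/-!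
Along the ray `x + s v` the rate `max(0, ⟨∇U, v⟩)` is `2 max(0, a + s b)` with `a = ⟨x, v⟩` and
`b = ‖v‖²`, whose antiderivative is `max(0, a + s b)² / b`. The bounce equation therefore reads
`max(0, a + τ b)² = max(0, a)² - b log V`, and both branches of the stated `τ` are
`(-a + √(max(0, a)² - b log V)) / b`.
-/

open scoped RealInnerProductSpace

theorem hasDerivAt_max_zero_sq (u : ℝ) :
    HasDerivAt (fun w : ℝ => max w 0 ^ 2) (2 * max u 0) u := by
  refine hasDerivAt_of_hasDerivAt_of_ne' (f := fun w : ℝ => max w 0 ^ 2)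
    (g := fun w : ℝ => 2 * max w 0) (x := 0) (fun y hy => ?_) (by fun_prop) (by fun_prop) u
  rcases hy.lt_or_gt with hy | hy
  · rw [max_eq_right hy.le, mul_zero]
    refine (hasDerivAt_const y (0 : ℝ)).congr_of_eventuallyEq ?_
    filter_upwards [Iio_mem_nhds hy] with w (hw : w < 0)
    simp [max_eq_right hw.le]
  · rw [max_eq_left hy.le]
    have hsq : HasDerivAt (· ^ 2) (2 * y) y := by simpa using hasDerivAt_pow 2 y
    refine hsq.congr_of_eventuallyEq ?_
    filter_upwards [Ioi_mem_nhds hy] with w (hw : 0 < w)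
    simp [max_eq_left hw.le]

theorem integral_two_mul_max_affine_zero {a b : ℝ} (hb : b ≠ 0) (t : ℝ) :
    ∫ s in (0 : ℝ)..t, 2 * max (a + s * b) 0 = (max (a + t * b) 0 ^ 2 - max a 0 ^ 2) / b := by
  have hderiv : ∀ s : ℝ,
      HasDerivAt (fun s => max (a + s * b) 0 ^ 2 / b) (2 * max (a + s * b) 0) s := by
    intro s
    have hlin : HasDerivAt (fun s => a + s * b) b s := by
      simpa using ((hasDerivAt_id s).mul_const b).const_add a
    simpa [mul_div_assoc, hb] using ((hasDerivAt_max_zero_sq _).comp s hlin).div_const b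
  rw [intervalIntegral.integral_eq_sub_of_hasDerivAt (fun s _ => hderiv s)
    (Continuous.intervalIntegrable (by fun_prop) _ _)]
  simp [sub_div]

theorem gradient_norm_sq {F : Type*} [NormedAddCommGroup F] [InnerProductSpace ℝ F]
    [CompleteSpace F] (x : F) : gradient (fun y : F => ‖y‖ ^ 2) x = (2 : ℝ) • x := by
  refine ((hasStrictFDerivAt_norm_sq x).hasFDerivAt.hasGradientAt).gradient.trans ?_
  refine (InnerProductSpace.toDual ℝ F).symm_apply_eq.mpr (ContinuousLinearMap.ext fun y => ?_)
  simp [InnerProductSpace.toDual_apply_apply]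

noncomputable def affineBounceTime (a b c : ℝ) : ℝ := (-a + √(max a 0 ^ 2 + b * c)) / b

theorem le_sqrt_max_sq_add {a r : ℝ} (hr : 0 ≤ r) : a ≤ √(max a 0 ^ 2 + r) :=
  calc a ≤ max a 0 := le_max_left a 0
    _ = √(max a 0 ^ 2) := (Real.sqrt_sq (le_max_right a 0)).symm
    _ ≤ √(max a 0 ^ 2 + r) := Real.sqrt_le_sqrt (by linarith)

theorem affineBounceTime_nonneg {a b c : ℝ} (hb : 0 < b) (hc : 0 ≤ c) :
    0 ≤ affineBounceTime a b c :=
  div_nonneg (by linarith [le_sqrt_max_sq_add (a := a) (mul_nonneg hb.le hc)]) hb.le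

theorem integral_affineBounceTime {a b c : ℝ} (hb : 0 < b) (hc : 0 ≤ c) :
    ∫ s in (0 : ℝ)..affineBounceTime a b c, 2 * max (a + s * b) 0 = c := by
  have hroot : a + affineBounceTime a b c * b = √(max a 0 ^ 2 + b * c) := by
    rw [affineBounceTime, div_mul_cancel₀ _ hb.ne']; ring
  rw [integral_two_mul_max_affine_zero hb.ne', hroot, max_eq_left (Real.sqrt_nonneg _),
    Real.sq_sqrt (by positivity)]
  field_simp
  ring

/-- Example 2: explicit bounce time for the Gaussian energy
`U(x) = ‖x‖²`: the stated `τ` is nonnegative and solves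
`∫₀^τ max(0, ⟨∇U(x+sv), v⟩) ds = -log V`. -/
theorem bps_gaussian_bounce_time {d : ℕ}
    (x v : EuclideanSpace ℝ (Fin d)) (hv : v ≠ 0)
    (V : ℝ) (hV : V ∈ Set.Ioo (0:ℝ) 1)
    (τ : ℝ)
    (hτ : τ = if ⟪x, v⟫ ≤ 0 then
        (-⟪x, v⟫ + Real.sqrt (-‖v‖ ^ 2 * Real.log V)) / ‖v‖ ^ 2
      else
        (-⟪x, v⟫ + Real.sqrt (⟪x, v⟫ ^ 2 - ‖v‖ ^ 2 * Real.log V)) / ‖v‖ ^ 2) :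
    0 ≤ τ ∧
      ∫ s in (0:ℝ)..τ,
          max 0 ⟪gradient (fun y : EuclideanSpace ℝ (Fin d) => ‖y‖ ^ 2) (x + s • v), v⟫
        = -Real.log V := by
  have hb : 0 < ‖v‖ ^ 2 := by positivity
  have hc : 0 ≤ -Real.log V := neg_nonneg.mpr (Real.log_nonpos hV.1.le hV.2.le)
  have hτ_eq : τ = affineBounceTime ⟪x, v⟫ (‖v‖ ^ 2) (-Real.log V) := by
    rw [hτ, affineBounceTime]
    split_ifs with hxv
    · rw [max_eq_right hxv]; ring_nf
    · rw [max_eq_left (not_le.mp hxv).le]; ring_nf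
  have hintegrand : ∀ s : ℝ,
      max 0 ⟪gradient (fun y : EuclideanSpace ℝ (Fin d) => ‖y‖ ^ 2) (x + s • v), v⟫
        = 2 * max (⟪x, v⟫ + s * ‖v‖ ^ 2) 0 := by
    intro s
    rw [gradient_norm_sq, real_inner_smul_left, inner_add_left, real_inner_smul_left,
      real_inner_self_eq_norm_sq, max_comm,
      mul_max_of_nonneg _ _ (zero_le_two : (0 : ℝ) ≤ 2), mul_zero]
  simp_rw [hintegrand, hτ_eq]
  exact ⟨affineBounceTime_nonneg hb hc, integral_affineBounceTime hb hc⟩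
end

section
/- (Recursions for the isotropic Gaussian without refreshment.) Let U(x) = ‖x‖² on ℝ^d, let x, v ∈ ℝ^d with v ≠ 0, let V ∈ (0,1), let τ be the Gaussian bounce time: τ = ( -⟨x,v⟩ + sqrt( -‖v‖² log V ) ) / ‖v‖² if ⟨x,v⟩ ≤ 0 and τ = ( -⟨x,v⟩ + sqrt( ⟨x,v⟩² - ‖v‖² log V ) ) / ‖v‖² otherwise, and set x' = x + τ v and v' = v - 2(⟨x', v⟩/‖x'‖²) x' (assuming x' ≠ 0). Then: (i) ⟨x', v'⟩ = -sqrt( -‖v‖² log V ) if ⟨x,v⟩ ≤ 0 and ⟨x', v'⟩ = -sqrt( ⟨x,v⟩² - ‖v‖² log V ) otherwise; in particular ⟨x', v'⟩ ≤ 0; and (ii) ‖x'‖² = ‖x‖² - ⟨x,v⟩²/‖v‖² - log V if ⟨x,v⟩ ≤ 0 and ‖x'‖² = ‖x‖² - log V otherwise. -/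
open scoped RealInnerProductSpace

/-- recursions for one step of the BPS without refreshment for the
isotropic Gaussian energy `U(x) = ‖x‖²`: formulas for `⟨x', v'⟩` (which is always
nonpositive) and for `‖x'‖²` after travelling for the bounce time `τ` and bouncing. -/
theorem bps_gaussian_recursions {d : ℕ}
    (x v : EuclideanSpace ℝ (Fin d)) (hv : v ≠ 0)
    (V : ℝ) (hV : V ∈ Set.Ioo (0:ℝ) 1)
    (τ : ℝ)
    (hτ : τ = if ⟪x, v⟫ ≤ 0 then
        (-⟪x, v⟫ + Real.sqrt (-‖v‖ ^ 2 * Real.log V)) / ‖v‖ ^ 2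
      else
        (-⟪x, v⟫ + Real.sqrt (⟪x, v⟫ ^ 2 - ‖v‖ ^ 2 * Real.log V)) / ‖v‖ ^ 2)
    (x' v' : EuclideanSpace ℝ (Fin d))
    (hx' : x' = x + τ • v) (hx'ne : x' ≠ 0)
    (hv' : v' = v - (2 * ⟪x', v⟫ / ‖x'‖ ^ 2) • x') :
    (⟪x', v'⟫ = if ⟪x, v⟫ ≤ 0 then
        -Real.sqrt (-‖v‖ ^ 2 * Real.log V)
      else
        -Real.sqrt (⟪x, v⟫ ^ 2 - ‖v‖ ^ 2 * Real.log V)) ∧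
    ⟪x', v'⟫ ≤ 0 ∧
    (‖x'‖ ^ 2 = if ⟪x, v⟫ ≤ 0 then
        ‖x‖ ^ 2 - ⟪x, v⟫ ^ 2 / ‖v‖ ^ 2 - Real.log V
      else
        ‖x‖ ^ 2 - Real.log V) := by
  obtain ⟨hV0, hV1⟩ := hV
  have hL : Real.log V < 0 := Real.log_neg hV0 hV1
  have ha : (0:ℝ) < ‖v‖ ^ 2 := by
    have := norm_pos_iff.mpr hv
    positivity
  have hn' : (0:ℝ) < ‖x'‖ ^ 2 := by
    have := norm_pos_iff.mpr hx'ne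
    positivity
  have ha' : (‖v‖:ℝ) ^ 2 ≠ 0 := ne_of_gt ha
  have hn'' : (‖x'‖:ℝ) ^ 2 ≠ 0 := ne_of_gt hn'
  have hxv' : ⟪x', v⟫ = ⟪x, v⟫ + τ * ‖v‖ ^ 2 := by
    rw [hx', inner_add_left, real_inner_smul_left, real_inner_self_eq_norm_sq]
  have hnx' : ‖x'‖ ^ 2 = ‖x‖ ^ 2 + 2 * τ * ⟪x, v⟫ + τ ^ 2 * ‖v‖ ^ 2 := by
    rw [hx', ← real_inner_self_eq_norm_sq, ← real_inner_self_eq_norm_sq (x := x),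
      ← real_inner_self_eq_norm_sq (x := v), inner_add_add_self, real_inner_smul_left,
      real_inner_smul_right, real_inner_smul_left, real_inner_smul_right,
      real_inner_comm v x]
    ring
  have hiv : ⟪x', v'⟫ = -⟪x', v⟫ := by
    rw [hv', inner_sub_right, real_inner_smul_right, real_inner_self_eq_norm_sq]
    field_simp
    ring
  by_cases hs : ⟪x, v⟫ ≤ 0
  · have hnnL : (0:ℝ) ≤ -‖v‖ ^ 2 * Real.log V := by nlinarith
    have hr2 : Real.sqrt (-‖v‖ ^ 2 * Real.log V) ^ 2 = -‖v‖ ^ 2 * Real.log V :=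
      Real.sq_sqrt hnnL
    have hτa : τ * ‖v‖ ^ 2 = -⟪x, v⟫ + Real.sqrt (-‖v‖ ^ 2 * Real.log V) := by
      rw [hτ, if_pos hs]; field_simp
    have h1 : ⟪x', v⟫ = Real.sqrt (-‖v‖ ^ 2 * Real.log V) := by rw [hxv']; linarith
    refine ⟨by rw [if_pos hs, hiv, h1], by rw [hiv, h1]; simp [Real.sqrt_nonneg], ?_⟩
    rw [if_pos hs]
    have key : ‖x'‖ ^ 2 * ‖v‖ ^ 2 =
        ‖x‖ ^ 2 * ‖v‖ ^ 2 - ⟪x, v⟫ ^ 2 - Real.log V * ‖v‖ ^ 2 := by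
      linear_combination ‖v‖ ^ 2 * hnx' +
        (τ * ‖v‖ ^ 2 + ⟪x, v⟫ + Real.sqrt (-‖v‖ ^ 2 * Real.log V)) * hτa + hr2
    have h4 : (‖x‖ ^ 2 - ⟪x, v⟫ ^ 2 / ‖v‖ ^ 2 - Real.log V) * ‖v‖ ^ 2 =
        ‖x‖ ^ 2 * ‖v‖ ^ 2 - ⟪x, v⟫ ^ 2 - Real.log V * ‖v‖ ^ 2 := by
      field_simp
    exact mul_right_cancel₀ ha' (key.trans h4.symm)
  · push_neg at hs
    have hnnL : (0:ℝ) ≤ ⟪x, v⟫ ^ 2 - ‖v‖ ^ 2 * Real.log V := by nlinarith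
    have hr2 : Real.sqrt (⟪x, v⟫ ^ 2 - ‖v‖ ^ 2 * Real.log V) ^ 2 =
        ⟪x, v⟫ ^ 2 - ‖v‖ ^ 2 * Real.log V := Real.sq_sqrt hnnL
    have hτa : τ * ‖v‖ ^ 2 = -⟪x, v⟫ + Real.sqrt (⟪x, v⟫ ^ 2 - ‖v‖ ^ 2 * Real.log V) := by
      rw [hτ, if_neg (not_le.mpr hs)]; field_simp
    have h1 : ⟪x', v⟫ = Real.sqrt (⟪x, v⟫ ^ 2 - ‖v‖ ^ 2 * Real.log V) := by rw [hxv']; linarith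
    refine ⟨by rw [if_neg (not_le.mpr hs), hiv, h1],
      by rw [hiv, h1]; simp [Real.sqrt_nonneg], ?_⟩
    rw [if_neg (not_le.mpr hs)]
    have key : ‖x'‖ ^ 2 * ‖v‖ ^ 2 = (‖x‖ ^ 2 - Real.log V) * ‖v‖ ^ 2 := by
      linear_combination ‖v‖ ^ 2 * hnx' +
        (τ * ‖v‖ ^ 2 + ⟪x, v⟫ + Real.sqrt (⟪x, v⟫ ^ 2 - ‖v‖ ^ 2 * Real.log V)) * hτa + hr2
    exact mul_right_cancel₀ ha' key
end

section
/- (Non-ergodicity counterexample, Section 4.1 of the paper.) Let d ≥ 2 and consider a piecewise-linear BPS trajectory for U(x) = ‖x‖² without refreshment: sequences x^(0), x^(1), … ∈ ℝ^d, v^(0), v^(1), … ∈ ℝ^d with ‖v^(i)‖ = 1 for all i, times τ_i ≥ 0 with x^(i) = x^(i-1) + τ_i v^(i-1), x^(i) ≠ 0, and v^(i) = v^(i-1) - 2(⟨x^(i), v^(i-1)⟩/‖x^(i)‖²) x^(i). Then the squared distance of the line of motion to the origin, ‖x^(i)‖² - ⟨x^(i), v^(i)⟩², is the same for all i, and consequently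 ‖x^(i) + t v^(i)‖² ≥ ‖x^(0)‖² - ⟨x^(0), v^(0)⟩² for every i and every t ≥ 0. In particular, if x^(0) = e₁ and v^(0) = e₂ (standard basis vectors), then ‖x(t)‖ ≥ 1 at every point of the trajectory, so the ball of radius 1 around the origin is never entered. -/
open scoped RealInnerProductSpace

/-- Non-ergodicity counterexample, Section 4.1: along a BPS trajectory
for `U(x) = ‖x‖²` without refreshment, the squared distance of the line of motion to
the origin `‖x^(i)‖² - ⟨x^(i), v^(i)⟩²` is conserved; hence
`‖x^(i) + t v^(i)‖² ≥ ‖x^(0)‖² - ⟨x^(0), v^(0)⟩²` for all `i` and `t ≥ 0`; in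
particular if `x^(0) = e₁`, `v^(0) = e₂` then `‖x(t)‖ ≥ 1` along the trajectory. -/
theorem bps_gaussian_no_refresh_not_ergodic {d : ℕ} (hd : 2 ≤ d)
    (x v : ℕ → EuclideanSpace ℝ (Fin d)) (τ : ℕ → ℝ)
    (hτ : ∀ i, 0 ≤ τ i)
    (hvnorm : ∀ i, ‖v i‖ = 1)
    (hx : ∀ i, x (i + 1) = x i + τ i • v i)
    (hxne : ∀ i, x (i + 1) ≠ 0)
    (hv : ∀ i, v (i + 1)
      = v i - (2 * ⟪x (i + 1), v i⟫ / ‖x (i + 1)‖ ^ 2) • x (i + 1)) :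
    (∀ i, ‖x i‖ ^ 2 - ⟪x i, v i⟫ ^ 2 = ‖x 0‖ ^ 2 - ⟪x 0, v 0⟫ ^ 2) ∧
    (∀ i, ∀ t : ℝ, 0 ≤ t →
      ‖x 0‖ ^ 2 - ⟪x 0, v 0⟫ ^ 2 ≤ ‖x i + t • v i‖ ^ 2) ∧
    (x 0 = EuclideanSpace.single (⟨0, by omega⟩ : Fin d) 1 →
      v 0 = EuclideanSpace.single (⟨1, by omega⟩ : Fin d) 1 →
      ∀ i, ∀ t : ℝ, 0 ≤ t → 1 ≤ ‖x i + t • v i‖) := by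
  have key : ∀ i, ‖x i‖ ^ 2 - ⟪x i, v i⟫ ^ 2 = ‖x 0‖ ^ 2 - ⟪x 0, v 0⟫ ^ 2 := by
    intro i
    induction i with
    | zero => rfl
    | succ n ih =>
      have hxn : ‖x (n+1)‖ ≠ 0 := norm_ne_zero_iff.mpr (hxne n)
      have hxn2 : ‖x (n+1)‖ ^ 2 ≠ 0 := pow_ne_zero 2 hxn
      have h1 : ⟪x (n+1), v (n+1)⟫ = -⟪x (n+1), v n⟫ := by
        rw [hv n, inner_sub_right, real_inner_smul_right,
          real_inner_self_eq_norm_sq]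
        field_simp
        ring
      have h3 : ⟪x (n+1), v n⟫ = ⟪x n, v n⟫ + τ n := by
        rw [hx n, inner_add_left, real_inner_smul_left,
          real_inner_self_eq_norm_sq, hvnorm n]
        ring
      have h2 : ‖x (n+1)‖ ^ 2 = ‖x n‖ ^ 2 + 2 * τ n * ⟪x n, v n⟫ + τ n ^ 2 := by
        rw [hx n, norm_add_sq_real, real_inner_smul_right, norm_smul,
          hvnorm n, Real.norm_eq_abs, mul_one, sq_abs]
        ring
      rw [h1, h2, h3, ← ih]; ring
  have main : ∀ i, ∀ t : ℝ, ‖x 0‖ ^ 2 - ⟪x 0, v 0⟫ ^ 2 ≤ ‖x i + t • v i‖ ^ 2 := by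
    intro i t
    rw [← key i]
    have h2 : ‖x i + t • v i‖ ^ 2 = ‖x i‖ ^ 2 + 2 * t * ⟪x i, v i⟫ + t ^ 2 := by
      rw [norm_add_sq_real, real_inner_smul_right, norm_smul,
        hvnorm i, Real.norm_eq_abs, mul_one, sq_abs]
      ring
    nlinarith [sq_nonneg (t + ⟪x i, v i⟫)]
  refine ⟨key, fun i t _ => main i t, fun hx0 hv0 i t _ => ?_⟩
  have hne : (⟨0, by omega⟩ : Fin d) ≠ (⟨1, by omega⟩ : Fin d) := by
    simp [Fin.ext_iff]
  have hnx0 : ‖x 0‖ = 1 := by rw [hx0, EuclideanSpace.norm_single]; norm_num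
  have hinner : ⟪x 0, v 0⟫ = 0 := by
    rw [hx0, hv0, EuclideanSpace.inner_single_left, EuclideanSpace.single_apply,
      if_neg hne]
    norm_num
  have h := main i t
  rw [hnx0, hinner] at h
  nlinarith [norm_nonneg (x i + t • v i)]
end

section
/- (Bound on the logistic-regression bounce intensity, Appendix B.1 of the paper.) Let ι ∈ ℝ^d with ι_k ≥ 0 for all k, let y ∈ {0,1}, and define U(x) = log(1 + exp⟨ι, x⟩) - y⟨ι, x⟩. Then for all x, v ∈ ℝ^d, max(0, ⟨∇U(x), v⟩) ≤ Σ_{k=1}^d 1[ v_k (-1)^y ≥ 0 ] ι_k |v_k|. In particular the bound is independent of x, so it holds uniformly along any line x + t v. -/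
/-!
The potential is `g ⟪ι, x⟫` for the one-dimensional logistic loss `g t = log (1 + exp t) - y t`,
so `∇U(x) = (σ⟪ι, x⟫ - y) • ι` with `σ` the sigmoid. Since `σ` takes values in `[0, 1]`, the
scalar `p = (σ⟪ι, x⟫ - y)(-1)^y` lies in `[0, 1]` for `y ∈ {0, 1}`, and
`⟪∇U(x), v⟫ = ∑ₖ p ιₖ (vₖ (-1)^y)`, each term of which is at most `ιₖ |vₖ|` when
`vₖ (-1)^y ≥ 0` and at most `0` otherwise.
-/

open scoped RealInnerProductSpace

open Real Set

lemma Real.hasDerivAt_logisticLoss (y t : ℝ) :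
    HasDerivAt (fun t => log (1 + exp t) - y * t) (sigmoid t - y) t := by
  have hsigmoid : exp t / (1 + exp t) = sigmoid t := by
    rw [sigmoid_def, exp_neg]
    field_simp
    ring
  have hsoftplus := ((hasDerivAt_exp t).const_add 1).log (by positivity)
  simpa [hsigmoid] using hsoftplus.fun_sub ((hasDerivAt_id t).const_mul y)

lemma hasGradientAt_comp_inner {F : Type*} [NormedAddCommGroup F] [InnerProductSpace ℝ F]
    [CompleteSpace F] {g : ℝ → ℝ} {g' : ℝ} (a x : F) (hg : HasDerivAt g g' ⟪a, x⟫) :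
    HasGradientAt (fun z => g ⟪a, z⟫) (g' • a) x := by
  rw [hasGradientAt_iff_hasFDerivAt]
  refine (hg.comp_hasFDerivAt x (innerSL ℝ a).hasFDerivAt).congr_fderiv ?_
  ext w
  simp

lemma Real.sigmoid_sub_mul_neg_one_pow_mem_Icc {y : ℕ} (hy : y = 0 ∨ y = 1) (t : ℝ) :
    (sigmoid t - y) * (-1) ^ y ∈ Icc (0 : ℝ) 1 := by
  have h0 := sigmoid_nonneg t
  have h1 := sigmoid_le_one t
  rcases hy with rfl | rfl <;> constructor <;> norm_num <;> linarith

lemma mul_mul_le_ite_of_abs_eq_one {c s a v : ℝ} (hs : |s| = 1) (hc : c * s ∈ Icc 0 1)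
    (ha : 0 ≤ a) : c * (a * v) ≤ if 0 ≤ v * s then a * |v| else 0 := by
  have hss : s * s = 1 := by rw [← abs_mul_abs_self, hs, one_mul]
  have hcv : c * (a * v) = c * s * (a * (v * s)) := by linear_combination c * a * v * hss.symm
  obtain ⟨hc0, hc1⟩ := hc
  split_ifs with h
  · calc c * (a * v) = c * s * (a * (v * s)) := hcv
      _ ≤ 1 * (a * (v * s)) := by gcongr
      _ = a * |v| := by rw [one_mul, ← abs_of_nonneg h, abs_mul, hs, mul_one]
  · rw [hcv]
    exact mul_nonpos_of_nonneg_of_nonpos hc0 (mul_nonpos_of_nonneg_of_nonpos ha (by linarith))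

/-- Appendix B.1: bound on the logistic-regression bounce intensity.
For `U(x) = log(1 + exp⟨ι,x⟩) - y⟨ι,x⟩` with nonnegative covariates `ι` and label
`y ∈ {0,1}`: `max(0, ⟨∇U(x), v⟩) ≤ ∑_k 1[v_k (-1)^y ≥ 0] ι_k |v_k|` for all `x, v`. -/
theorem logistic_bounce_intensity_bound {d : ℕ}
    (ι : EuclideanSpace ℝ (Fin d)) (hι : ∀ k, 0 ≤ ι k)
    (y : ℕ) (hy : y = 0 ∨ y = 1)
    (U : EuclideanSpace ℝ (Fin d) → ℝ)
    (hU : ∀ x, U x = Real.log (1 + Real.exp ⟪ι, x⟫) - (y : ℝ) * ⟪ι, x⟫) :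
    ∀ x v : EuclideanSpace ℝ (Fin d),
      max 0 ⟪gradient U x, v⟫
        ≤ ∑ k, (if 0 ≤ v k * (-1 : ℝ) ^ y then ι k * |v k| else 0) := by
  intro x v
  obtain rfl : U = fun z => log (1 + exp ⟪ι, z⟫) - y * ⟪ι, z⟫ := funext hU
  have hgrad := (hasGradientAt_comp_inner ι x (hasDerivAt_logisticLoss y ⟪ι, x⟫)).gradient
  rw [hgrad, real_inner_smul_left, PiLp.inner_apply ι v, Finset.mul_sum]
  refine max_le (Finset.sum_nonneg fun k _ => ?_) (Finset.sum_le_sum fun k _ => ?_)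
  · split_ifs
    exacts [mul_nonneg (hι k) (abs_nonneg _), le_rfl]
  · rw [RCLike.inner_apply, conj_trivial, mul_comm (v k)]
    exact mul_mul_le_ite_of_abs_eq_one (by simp) (sigmoid_sub_mul_neg_one_pow_mem_Icc hy _) (hι k)
end
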